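/- Given matrices L_I and R_I (I = 1,...,N) of size d×d satisfying the garden algebra relations L_I R_J + L_J R_I = 2δ_{IJ} I_d and R_I L_J + R_J L_I = 2δ_{IJ} I_d, the 2d×2d matrices γ̂_I = ((1/2)(σ¹ + iσ²)) ⊗ L_I + ((1/2)(σ¹ − iσ²)) ⊗ R_I satisfy the Clifford algebra relations {γ̂_I, γ̂_J} = 2δ_{IJ} I_{2d}. -/

import Mathlib

/-!
The matrices `½(σ¹ ± iσ²)` are the raising and lowering matrices `σ₊, σ₋`, with
`σ₊² = σ₋² = 0` and `σ₊σ₋ + σ₋σ₊ = 1`. Hence in `{γ̂_I, γ̂_J}` only the mixed products survive,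
giving `σ₊σ₋ ⊗ (L_I R_J + L_J R_I) + σ₋σ₊ ⊗ (R_I L_J + R_J L_I)`; when both garden
anticommutators equal `2δ_{IJ}`, this is `(σ₊σ₋ + σ₋σ₊) ⊗ 2δ_{IJ} = 2δ_{IJ}`.
-/

open Matrix Kronecker

section NilpotentPair

variable {m n α : Type*} [Fintype m] [Fintype n] [CommSemiring α] {A B : Matrix m m α}

theorem kronecker_add_kronecker_mul (hA : A * A = 0) (hB : B * B = 0)
    (L R L' R' : Matrix n n α) :
    (A ⊗ₖ L + B ⊗ₖ R) * (A ⊗ₖ L' + B ⊗ₖ R') = (A * B) ⊗ₖ (L * R') + (B * A) ⊗ₖ (R * L') := by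
  simp only [add_mul, mul_add, ← mul_kronecker_mul, hA, hB, zero_kronecker, zero_add, add_zero]
  exact add_comm _ _

theorem kronecker_add_kronecker_anticomm [DecidableEq m] (hA : A * A = 0) (hB : B * B = 0)
    (hAB : A * B + B * A = 1) {L R L' R' S : Matrix n n α}
    (hLR : L * R' + L' * R = S) (hRL : R * L' + R' * L = S) :
    (A ⊗ₖ L + B ⊗ₖ R) * (A ⊗ₖ L' + B ⊗ₖ R') + (A ⊗ₖ L' + B ⊗ₖ R') * (A ⊗ₖ L + B ⊗ₖ R) =
      (1 : Matrix m m α) ⊗ₖ S := by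
  calc _ = (A * B) ⊗ₖ (L * R' + L' * R) + (B * A) ⊗ₖ (R * L' + R' * L) := by
        rw [kronecker_add_kronecker_mul hA hB, kronecker_add_kronecker_mul hA hB,
          kronecker_add, kronecker_add]
        abel
    _ = (1 : Matrix m m α) ⊗ₖ S := by rw [hLR, hRL, ← add_kronecker, hAB]

end NilpotentPair

section RaisingLowering

variable {α : Type*} [Semiring α]

theorem raising_mul_raising : (!![0, 1; 0, 0] : Matrix (Fin 2) (Fin 2) α) * !![0, 1; 0, 0] = 0 := by
  simp [← Matrix.ext_iff, Fin.forall_fin_two]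

theorem lowering_mul_lowering : (!![0, 0; 1, 0] : Matrix (Fin 2) (Fin 2) α) * !![0, 0; 1, 0] = 0 := by
  simp [← Matrix.ext_iff, Fin.forall_fin_two]

theorem raising_mul_lowering_add_lowering_mul_raising :
    (!![0, 1; 0, 0] : Matrix (Fin 2) (Fin 2) α) * !![0, 0; 1, 0] +
      !![0, 0; 1, 0] * !![0, 1; 0, 0] = 1 := by
  simp [one_fin_two]

end RaisingLowering

theorem half_smul_pauli_one_add_I_smul_pauli_two :
    (1 / 2 : ℂ) • (!![0, 1; 1, 0] + Complex.I • !![0, -Complex.I; Complex.I, 0]) =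
      !![0, 1; 0, 0] := by
  norm_num [← Matrix.ext_iff, Fin.forall_fin_two]

theorem half_smul_pauli_one_sub_I_smul_pauli_two :
    (1 / 2 : ℂ) • (!![0, 1; 1, 0] - Complex.I • !![0, -Complex.I; Complex.I, 0]) =
      !![0, 0; 1, 0] := by
  ext i j
  fin_cases i <;> fin_cases j <;> norm_num

theorem garden_to_clifford (d N : ℕ)
    (L R : Fin N → Matrix (Fin d) (Fin d) ℂ)
    (h1 : ∀ I J, L I * R J + L J * R I =
      if I = J then (2 : ℂ) • (1 : Matrix (Fin d) (Fin d) ℂ) else 0)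
    (h2 : ∀ I J, R I * L J + R J * L I =
      if I = J then (2 : ℂ) • (1 : Matrix (Fin d) (Fin d) ℂ) else 0) :
    let σ1 : Matrix (Fin 2) (Fin 2) ℂ := !![0, 1; 1, 0]
    let σ2 : Matrix (Fin 2) (Fin 2) ℂ := !![0, -Complex.I; Complex.I, 0]
    let γ : Fin N → Matrix (Fin 2 × Fin d) (Fin 2 × Fin d) ℂ := fun I =>
      ((1 / 2 : ℂ) • (σ1 + Complex.I • σ2)) ⊗ₖ L I +
      ((1 / 2 : ℂ) • (σ1 - Complex.I • σ2)) ⊗ₖ R I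
    ∀ I J, γ I * γ J + γ J * γ I =
      if I = J then (2 : ℂ) • (1 : Matrix (Fin 2 × Fin d) (Fin 2 × Fin d) ℂ) else 0 := by
  intro σ1 σ2 γ I J
  have hγ : ∀ K, γ K = !![0, 1; 0, 0] ⊗ₖ L K + !![0, 0; 1, 0] ⊗ₖ R K := fun K => by
    simp only [γ, σ1, σ2, half_smul_pauli_one_add_I_smul_pauli_two,
      half_smul_pauli_one_sub_I_smul_pauli_two]
  rw [hγ, hγ, kronecker_add_kronecker_anticomm raising_mul_raising lowering_mul_lowering
    raising_mul_lowering_add_lowering_mul_raising (h1 I J) (h2 I J)]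
  split_ifs <;> simp [kronecker_smul]
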